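/- Assume Γ is an inverse semigroupoid, regarded as a *-semigroupoid with α* := α′. Let K be an H-operator-valued kernel on X which is Γ-invariant and partially positive semidefinite with respect to the partition {X_s}_{s∈S}. Then K is of bounded shift type; in fact the constant M_α = 1 works for every α ∈ Γ, i.e., for every α ∈ Γ and every finitely supported section g on X_{d(α)}, Σ_{x,y ∈ X_{d(α)}} ⟨K(α·x, α·y)g(y), g(x)⟩ ≤ Σ_{x,y ∈ X_{d(α)}} ⟨K(x,y)g(y), g(x)⟩. -/
import Mathlib


open scoped InnerProductSpace

noncomputable section

universe u uΓ uS v vO w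

/-- A `*`-semigroupoid: partially defined multiplication (the product `mul α β`
is subject to the axioms only when `d α = c β`) together with an involution. -/
structure StarSgd (Γ : Type uΓ) (S : Type uS) where
  d : Γ → S
  c : Γ → S
  mul : Γ → Γ → Γ
  star : Γ → Γ
  d_mul : ∀ {α β : Γ}, d α = c β → d (mul α β) = d β
  c_mul : ∀ {α β : Γ}, d α = c β → c (mul α β) = c α
  mul_assoc : ∀ {α β γ : Γ}, d α = c β → d β = c γ →
    mul α (mul β γ) = mul (mul α β) γ
  d_star : ∀ α, d (star α) = c α
  c_star : ∀ α, c (star α) = d α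
  star_star : ∀ α, star (star α) = α
  star_mul : ∀ {α β : Γ}, d α = c β → star (mul α β) = mul (star β) (star α)

/-- A left action of a semigroupoid on a set `X`, with surjective anchor `a`;
`act α x` is subject to the axioms only when `d α = a x`. -/
structure SgdAction (Γ : Type uΓ) (S : Type uS) (X : Type v) (G : StarSgd Γ S) where
  a : X → S
  a_surj : Function.Surjective a
  act : Γ → X → X
  a_act : ∀ {α : Γ} {x : X}, G.d α = a x → a (act α x) = G.c α
  act_mul : ∀ {α β : Γ} {x : X}, G.d β = a x → G.d α = G.c β →
    act (G.mul α β) x = act α (act β x)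

variable {𝕜 : Type u} [RCLike 𝕜] {Γ : Type uΓ} {S : Type uS} {X : Type v}
  {O : Type vO} {E : O → Type w}
  [∀ o, NormedAddCommGroup (E o)] [∀ o, InnerProductSpace 𝕜 (E o)]
  [∀ o, CompleteSpace (E o)]

/-- Transport along an equality of indices: since the Hilbert bundle over `X`
is given as a pullback `x ↦ E (p x)`, equal indices give literally the same
Hilbert space, and the transport is a linear isometry. -/
def castE (𝕜 : Type u) [RCLike 𝕜] {O : Type vO} (E : O → Type w)
    [∀ o, NormedAddCommGroup (E o)] [∀ o, InnerProductSpace 𝕜 (E o)]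
    {o o' : O} (h : o = o') : E o ≃ₗᵢ[𝕜] E o' := by
  subst h; exact LinearIsometryEquiv.refl 𝕜 (E o)

variable {G : StarSgd Γ S} (A : SgdAction Γ S X G) (p : X → O)

/-- `K` is partially Hermitian with respect to the partition of `X` into the
fibres of the anchor map. -/
def PartHermitian (K : ∀ y x : X, E (p x) →L[𝕜] E (p y)) : Prop :=
  ∀ x y : X, A.a x = A.a y → ContinuousLinearMap.adjoint (K x y) = K y x

/-- `K` is partially positive semidefinite with respect to the partition of
`X` into the fibres of the anchor map. -/
def PartPSD (K : ∀ y x : X, E (p x) →L[𝕜] E (p y)) : Prop :=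
  PartHermitian A p K ∧
  ∀ (s : S) (n : ℕ) (x : Fin n → X), (∀ i, A.a (x i) = s) →
    ∀ h : ∀ i, E (p (x i)),
      0 ≤ RCLike.re (∑ i, ∑ j, ⟪K (x j) (x i) (h i), h j⟫_𝕜)

variable (hp : ∀ {α : Γ} {x : X}, G.d α = A.a x → p (A.act α x) = p x)

/-- `K` is `Γ`-invariant: `K(α·x, y) = K(x, α*·y)`, expressed using the
transport isometries coming from the constancy of the bundle on orbits. -/
def GammaInvariant (K : ∀ y x : X, E (p x) →L[𝕜] E (p y)) : Prop :=
  ∀ (α : Γ) (x y : X) (hx : G.d α = A.a x) (hy : G.c α = A.a y) (k : E (p y)),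
    castE 𝕜 E (hp hx) (K (A.act α x) y k) =
      K x (A.act (G.star α) y)
        ((castE 𝕜 E (hp ((G.d_star α).trans hy))).symm k)

/-- `K` is of bounded shift type: for every `α` there is `M_α ≥ 0` dominating
the shifted quadratic forms by the original ones (stated via finite families of
points in the fibre `X_{d(α)}`). -/
def BoundedShiftType (K : ∀ y x : X, E (p x) →L[𝕜] E (p y)) : Prop :=
  ∀ α : Γ, ∃ M : ℝ, 0 ≤ M ∧
    ∀ (n : ℕ) (z : Fin n → X) (hz : ∀ i, G.d α = A.a (z i))
      (g : ∀ i, E (p (z i))),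
      RCLike.re (∑ i, ∑ j, ⟪K (A.act α (z j)) (A.act α (z i))
          ((castE 𝕜 E (hp (hz i))).symm (g i)),
          (castE 𝕜 E (hp (hz j))).symm (g j)⟫_𝕜) ≤
        M * RCLike.re (∑ i, ∑ j, ⟪K (z j) (z i) (g i), g j⟫_𝕜)


section Aux

lemma inner_castE {o o' : O} (h : o = o') (u : E o) (v : E o') :
    ⟪castE 𝕜 E h u, v⟫_𝕜 = ⟪u, (castE 𝕜 E h).symm v⟫_𝕜 := by subst h; rfl

lemma castE_symm_trans {o₁ o₂ o₃ : O} (h : o₂ = o₃) (h' : o₁ = o₂) (v : E o₃) :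
    (castE 𝕜 E h').symm ((castE 𝕜 E h).symm v) = (castE 𝕜 E (h'.trans h)).symm v := by
  subst h; subst h'; rfl

lemma K_snd_congr (K : ∀ y x : X, E (p x) →L[𝕜] E (p y)) (y : X) {u u' : X}
    (h : u = u') {o : O} (hu : p u = o) (hu' : p u' = o) (g : E o) (g' : E (p y)) :
    ⟪K y u' ((castE 𝕜 E hu').symm g), g'⟫_𝕜 = ⟪K y u ((castE 𝕜 E hu).symm g), g'⟫_𝕜 := by
  subst h; rfl

lemma bridge {K : ∀ y x : X, E (p x) →L[𝕜] E (p y)}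
    (hKinv : GammaInvariant A p hp K) (α : Γ) (x y : X)
    (hx : G.d α = A.a x) (hy : G.d α = A.a y)
    (hex : G.d (G.mul (G.star α) α) = A.a x)
    (g : E (p x)) (g' : E (p y)) :
    ⟪K (A.act α y) (A.act α x) ((castE 𝕜 E (hp hx)).symm g),
      (castE 𝕜 E (hp hy)).symm g'⟫_𝕜 =
    ⟪K y (A.act (G.mul (G.star α) α) x) ((castE 𝕜 E (hp hex)).symm g), g'⟫_𝕜 := by
  rw [← inner_castE]
  rw [hKinv α y (A.act α x) hy (A.a_act hx).symm ((castE 𝕜 E (hp hx)).symm g)]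
  rw [castE_symm_trans]
  exact K_snd_congr p K y (A.act_mul hx (G.d_star α)) (hp hex) _ g g'

lemma two_family_psd (K : ∀ y x : X, E (p x) →L[𝕜] E (p y)) (hK : PartPSD A p K)
    (s : S) (n : ℕ) (z w : Fin n → X)
    (hz : ∀ i, A.a (z i) = s) (hw : ∀ i, A.a (w i) = s)
    (g : ∀ i, E (p (z i))) (h : ∀ i, E (p (w i))) :
    0 ≤ RCLike.re ((∑ i, ∑ j, ⟪K (z j) (z i) (g i), g j⟫_𝕜)
      + (∑ i, ∑ j, ⟪K (w j) (z i) (g i), h j⟫_𝕜)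
      + (∑ i, ∑ j, ⟪K (z j) (w i) (h i), g j⟫_𝕜)
      + (∑ i, ∑ j, ⟪K (w j) (w i) (h i), h j⟫_𝕜)) := by
  classical
  have key := hK.2 s (n + n) (fun k => Sum.elim z w (finSumFinEquiv.symm k))
    (fun k => Sum.rec (motive := fun t => A.a (Sum.elim z w t) = s)
      (fun i => hz i) (fun i => hw i) (finSumFinEquiv.symm k))
    (fun k => Sum.rec (motive := fun t => E (p (Sum.elim z w t)))
      (fun i => g i) (fun i => h i) (finSumFinEquiv.symm k))
  refine key.trans_eq (congrArg (fun q => RCLike.re (K := 𝕜) q) ?_)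
  have h1 : (∑ k : Fin (n + n), ∑ l : Fin (n + n),
      ⟪K (Sum.elim z w (finSumFinEquiv.symm l)) (Sum.elim z w (finSumFinEquiv.symm k))
        (Sum.rec (motive := fun t => E (p (Sum.elim z w t)))
          (fun i => g i) (fun i => h i) (finSumFinEquiv.symm k)),
        Sum.rec (motive := fun t => E (p (Sum.elim z w t)))
          (fun i => g i) (fun i => h i) (finSumFinEquiv.symm l)⟫_𝕜)
      = ∑ s' : Fin n ⊕ Fin n, ∑ t : Fin n ⊕ Fin n,
        ⟪K (Sum.elim z w t) (Sum.elim z w s')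
          (Sum.rec (motive := fun t' => E (p (Sum.elim z w t')))
            (fun i => g i) (fun i => h i) s'),
          Sum.rec (motive := fun t' => E (p (Sum.elim z w t')))
            (fun i => g i) (fun i => h i) t⟫_𝕜 := by
    refine Fintype.sum_bijective _ finSumFinEquiv.symm.bijective _ _ (fun k => ?_)
    exact Fintype.sum_bijective _ finSumFinEquiv.symm.bijective _ _ (fun l => rfl)
  refine h1.trans ?_
  simp only [Fintype.sum_sum_type]
  rw [Finset.sum_add_distrib, Finset.sum_add_distrib]
  exact (add_assoc _ _ _).symm

lemma key_ineq
    (hstar₂ : ∀ α : Γ, G.mul (G.mul (G.star α) α) (G.star α) = G.star α)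
    (K : ∀ y x : X, E (p x) →L[𝕜] E (p y))
    (hK : PartPSD A p K) (hKinv : GammaInvariant A p hp K)
    (α : Γ) (n : ℕ) (z : Fin n → X) (hz : ∀ i, G.d α = A.a (z i))
    (g : ∀ i, E (p (z i))) :
    RCLike.re (∑ i, ∑ j, ⟪K (A.act α (z j)) (A.act α (z i))
        ((castE 𝕜 E (hp (hz i))).symm (g i)),
        (castE 𝕜 E (hp (hz j))).symm (g j)⟫_𝕜) ≤
      RCLike.re (∑ i, ∑ j, ⟪K (z j) (z i) (g i), g j⟫_𝕜) := by
  classical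
  have hde : G.d (G.mul (G.star α) α) = G.d α := G.d_mul (G.d_star α)
  have hce : G.c (G.mul (G.star α) α) = G.d α := (G.c_mul (G.d_star α)).trans (G.c_star α)
  have hstar_e : G.star (G.mul (G.star α) α) = G.mul (G.star α) α := by
    rw [G.star_mul (G.d_star α), G.star_star]
  have hmul_ee : G.mul (G.mul (G.star α) α) (G.mul (G.star α) α) = G.mul (G.star α) α := by
    rw [G.mul_assoc (hde.trans (G.c_star α).symm) (G.d_star α), hstar₂]
  have he : G.mul (G.star (G.mul (G.star α) α)) (G.mul (G.star α) α) = G.mul (G.star α) α := by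
    rw [hstar_e]; exact hmul_ee
  have hez : ∀ i, G.d (G.mul (G.star α) α) = A.a (z i) := fun i => hde.trans (hz i)
  have hexe : ∀ i, G.d (G.mul (G.star (G.mul (G.star α) α)) (G.mul (G.star α) α))
      = A.a (z i) := fun i => ((G.d_mul (G.d_star _)).trans hde).trans (hz i)
  have haw : ∀ i, A.a (A.act (G.mul (G.star α) α) (z i)) = G.d α :=
    fun i => (A.a_act (hez i)).trans hce
  -- the shifted quadratic form agrees with the mixed one
  have hshift : (∑ i, ∑ j, ⟪K (A.act α (z j)) (A.act α (z i))
        ((castE 𝕜 E (hp (hz i))).symm (g i)),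
        (castE 𝕜 E (hp (hz j))).symm (g j)⟫_𝕜)
      = ∑ i, ∑ j, ⟪K (z j) (A.act (G.mul (G.star α) α) (z i))
          ((castE 𝕜 E (hp (hez i))).symm (g i)), g j⟫_𝕜 :=
    Finset.sum_congr rfl fun i _ => Finset.sum_congr rfl fun j _ =>
      bridge A p hp hKinv α (z i) (z j) (hz i) (hz j) (hez i) (g i) (g j)
  -- the (w,w)-block agrees with the mixed one
  have hD : (∑ i, ∑ j, ⟪K (A.act (G.mul (G.star α) α) (z j))
        (A.act (G.mul (G.star α) α) (z i))
        ((castE 𝕜 E (hp (hez i))).symm (g i)),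
        (castE 𝕜 E (hp (hez j))).symm (g j)⟫_𝕜)
      = ∑ i, ∑ j, ⟪K (z j) (A.act (G.mul (G.star α) α) (z i))
          ((castE 𝕜 E (hp (hez i))).symm (g i)), g j⟫_𝕜 := by
    refine Finset.sum_congr rfl fun i _ => Finset.sum_congr rfl fun j _ => ?_
    refine (bridge A p hp hKinv (G.mul (G.star α) α) (z i) (z j) (hez i) (hez j)
      (hexe i) (g i) (g j)).trans ?_
    exact K_snd_congr p K (z j)
      (congrArg (fun γ => A.act γ (z i)) he).symm (hp (hez i)) (hp (hexe i)) (g i) (g j)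
  -- the (z,w)-block has the same real part as the mixed one
  have hC : RCLike.re (∑ i, ∑ j, ⟪K (A.act (G.mul (G.star α) α) (z j)) (z i) (g i),
        (castE 𝕜 E (hp (hez j))).symm (g j)⟫_𝕜)
      = RCLike.re (∑ i, ∑ j, ⟪K (z j) (A.act (G.mul (G.star α) α) (z i))
          ((castE 𝕜 E (hp (hez i))).symm (g i)), g j⟫_𝕜) := by
    rw [Finset.sum_comm]
    simp only [map_sum]
    refine Finset.sum_congr rfl fun a _ => Finset.sum_congr rfl fun b _ => ?_
    rw [← hK.1 (z b) (A.act (G.mul (G.star α) α) (z a))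
      ((hz b).symm.trans (haw a).symm)]
    rw [ContinuousLinearMap.adjoint_inner_left]
    exact inner_re_symm _ _
  have hpos := two_family_psd A p K hK (G.d α) n z
    (fun i => A.act (G.mul (G.star α) α) (z i))
    (fun i => (hz i).symm) haw g
    (fun i => -((castE 𝕜 E (hp (hez i))).symm (g i)))
  simp only [map_neg, inner_neg_left, inner_neg_right, neg_neg, Finset.sum_neg_distrib] at hpos
  rw [hD] at hpos
  simp only [map_add, map_neg] at hpos
  rw [hC] at hpos
  rw [hshift]
  linarith

end Aux

/-- if `Γ` is an inverse semigroupoid (each `α` has a unique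
generalised inverse, which is `α*`), then every `Γ`-invariant partially
positive semidefinite kernel `K` is of bounded shift type, with constant
`M_α = 1` for every `α`. -/
theorem inverse_semigroupoid_bounded_shift
    (hstar₁ : ∀ α : Γ, G.mul (G.mul α (G.star α)) α = α)
    (hstar₂ : ∀ α : Γ, G.mul (G.mul (G.star α) α) (G.star α) = G.star α)
    (huniq : ∀ α β : Γ, G.d β = G.c α → G.c β = G.d α →
      G.mul (G.mul α β) α = α → G.mul (G.mul β α) β = β → β = G.star α)
    (K : ∀ y x : X, E (p x) →L[𝕜] E (p y))
    (hK : PartPSD A p K) (hKinv : GammaInvariant A p hp K) :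
    BoundedShiftType A p hp K ∧
    ∀ (α : Γ) (n : ℕ) (z : Fin n → X) (hz : ∀ i, G.d α = A.a (z i))
      (g : ∀ i, E (p (z i))),
      RCLike.re (∑ i, ∑ j, ⟪K (A.act α (z j)) (A.act α (z i))
          ((castE 𝕜 E (hp (hz i))).symm (g i)),
          (castE 𝕜 E (hp (hz j))).symm (g j)⟫_𝕜) ≤
        RCLike.re (∑ i, ∑ j, ⟪K (z j) (z i) (g i), g j⟫_𝕜) := by
  refine ⟨fun α => ⟨1, zero_le_one, fun n z hz g => ?_⟩,
    fun α n z hz g => key_ineq A p hp hstar₂ K hK hKinv α n z hz g⟩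
  rw [one_mul]
  exact key_ineq A p hp hstar₂ K hK hKinv α n z hz g
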